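/- arXiv:2507.19108 — 6 statements merged into one kernel-verified Lean document; each statement's English description precedes it below -/
import Mathlib

section
/- Let G be a tournament on vertex set V, let U ⊆ V, and let v ∈ V \ U. If u is a weak king for U, then either u or v is a weak king for U ∪ {v}. -/
def IsTournament {V : Type*} (E : V → V → Prop) : Prop :=
  (∀ v, ¬ E v v) ∧ ∀ u v : V, u ≠ v → (E u v ↔ ¬ E v u)

/-- `u` is a weak king for `U`: `u ∈ U` and every vertex of `U` is reachable from `u`
by a directed path of length at most 2 (intermediate vertices may be outside `U`). -/
def IsWeakKing {V : Type*} (E : V → V → Prop) (U : Set V) (u : V) : Prop :=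
  u ∈ U ∧ ∀ x ∈ U, x = u ∨ E u x ∨ ∃ j : V, E u j ∧ E j x

theorem weak_king_extend {V : Type*} (E : V → V → Prop) (hT : IsTournament E)
    (U : Set V) (u v : V) (hv : v ∉ U) (hu : IsWeakKing E U u) :
    IsWeakKing E (U ∪ {v}) u ∨ IsWeakKing E (U ∪ {v}) v := by
  obtain ⟨huU, hk⟩ := hu
  have hne : u ≠ v := fun h => hv (h ▸ huU)
  by_cases hreach : v = u ∨ E u v ∨ ∃ j : V, E u j ∧ E j v
  · left
    exact ⟨Or.inl huU, fun x hx => hx.elim (hk x) (fun hxv => hxv ▸ hreach)⟩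
  · right
    push_neg at hreach
    obtain ⟨hvu, huv, hj⟩ := hreach
    have hEvu : E v u := ((hT.2 u v hne).not_left.mp huv)
    refine ⟨Or.inr rfl, fun x hx => ?_⟩
    rcases hx with hx | hx
    · rcases hk x hx with rfl | h | ⟨j, h1, h2⟩
      · exact Or.inr (Or.inl hEvu)
      · -- E u x; then ¬ E x v (else u→x→v), so E v x
        have hxv : x ≠ v := fun hh => hv (hh ▸ hx)
        have : ¬ E x v := fun hh => hj x h hh
        exact Or.inr (Or.inl ((hT.2 v x (Ne.symm hxv)).mpr this))
      · -- E u j, so ¬ E j v, so E v j, path v→j→x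
        have hjv : j ≠ v := by
          rintro rfl; exact huv h1
        have : ¬ E j v := fun h => hj j h1 h
        exact Or.inr (Or.inr ⟨j, (hT.2 v j (Ne.symm hjv)).mpr this, h2⟩)
    · exact Or.inl hx
end

section
/- Let G be a tournament on vertex set V. For a vertex u, define W_u to be the set of vertices v ≠ u such that (u,v) is not an edge and for all w ∉ {u,v}, not both (u,w) and (w,v) are edges (i.e., v witnesses that u is not a king). Then for any u ∈ V and any v ∈ W_u, we have W_v ⊊ W_u (strict inclusion). -/
/-- `W E u` is the set of vertices witnessing that `u` is not a king: vertices `v ≠ u`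
with no directed path of length at most 2 from `u` to `v`. -/
def W {V : Type*} [Fintype V] [DecidableEq V] (E : V → V → Prop) [DecidableRel E]
    (u : V) : Finset V :=
  Finset.univ.filter
    (fun v => v ≠ u ∧ ¬ E u v ∧ ∀ w : V, w ≠ u → w ≠ v → ¬ (E u w ∧ E w v))

theorem W_strict_decrease {V : Type*} [Fintype V] [DecidableEq V]
    (E : V → V → Prop) [DecidableRel E] (hT : IsTournament E)
    (u v : V) (hv : v ∈ W E u) : W E v ⊂ W E u := by
  obtain ⟨hirr, htot⟩ := hT
  have hv' := hv
  simp only [W, Finset.mem_filter, Finset.mem_univ, true_and] at hv'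
  obtain ⟨hvu, hEuv, hpath⟩ := hv'
  have hEvu : E v u := by
    by_contra h
    exact hEuv ((htot u v (Ne.symm hvu)).mpr h)
  constructor
  · intro x hx
    simp only [W, Finset.mem_filter, Finset.mem_univ, true_and] at hx ⊢
    obtain ⟨hxv, hEvx, hpath'⟩ := hx
    have hxu : x ≠ u := by
      rintro rfl
      exact hEvx hEvu
    have hEux : ¬ E u x := by
      intro h
      have hExv : E x v := (htot x v hxv).mpr hEvx
      exact hpath x hxu hxv ⟨h, hExv⟩
    refine ⟨hxu, hEux, ?_⟩
    rintro w hwu hwx ⟨hEuw, hEwx⟩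
    have hwv : w ≠ v := by
      rintro rfl
      exact hEuv hEuw
    have hEwv : E w v := by
      by_contra h
      have : E v w := (htot v w (fun e => hwv e.symm)).mpr h
      exact hpath' w hwv hwx ⟨this, hEwx⟩
    exact hpath w hwu hwv ⟨hEuw, hEwv⟩
  · intro hsub
    have := hsub hv
    simp only [W, Finset.mem_filter, Finset.mem_univ, true_and] at this
    exact this.1 rfl
end

section
/- Let G be a tournament on vertex set V and u ∈ V with W_u nonempty of size s. Then at least 1/4 of the vertices v in W_u satisfy |W_v| ≤ 2(s-1)/3, where W_x denotes the set of vertices not reachable from x by a directed path of length at most 2. More precisely, at least ⌈s/4⌉ vertices v ∈ W_u have out-degree at least (s-1)/3 in the induced subtournament on W_u, and for such v, |W_v| ≤ (s-1) - (s-1)/3. -/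
/-- The out-degree of `v` in the subtournament induced on the vertex set `S`. -/
def outDegIn {V : Type*} [Fintype V] [DecidableEq V] (E : V → V → Prop) [DecidableRel E]
    (S : Finset V) (v : V) : ℕ :=
  (S.filter (fun w => E v w)).card

lemma mem_W_iff {V : Type*} [Fintype V] [DecidableEq V] (E : V → V → Prop) [DecidableRel E]
    (u v : V) :
    v ∈ W E u ↔ v ≠ u ∧ ¬ E u v ∧ ∀ w : V, w ≠ u → w ≠ v → ¬ (E u w ∧ E w v) := by
  simp [W]

lemma W_subset {V : Type*} [Fintype V] [DecidableEq V] {E : V → V → Prop} [DecidableRel E]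
    (hT : IsTournament E) {u v : V} (hv : v ∈ W E u) : W E v ⊆ W E u := by
  intro w hw
  rw [mem_W_iff] at hv hw ⊢
  obtain ⟨hvu, hnuv, hv2⟩ := hv
  obtain ⟨hwv, hnvw, hw2⟩ := hw
  have hEvu : E v u := (hT.2 v u hvu).mpr hnuv
  have hwu : w ≠ u := by rintro rfl; exact hnvw hEvu
  refine ⟨hwu, ?_, ?_⟩
  · intro hEuw
    have hEwv : E w v := (hT.2 w v hwv).mpr hnvw
    exact hv2 w hwu hwv ⟨hEuw, hEwv⟩
  · rintro x hxu hxw ⟨hux, hxw'⟩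
    have hxv : x ≠ v := by rintro rfl; exact hnuv hux
    have hnxv : ¬ E x v := fun h => hv2 x hxu hxv ⟨hux, h⟩
    have hEvx : E v x := (hT.2 v x (Ne.symm hxv)).mpr hnxv
    exact hw2 x hxv hxw ⟨hEvx, hxw'⟩

lemma sum_outDeg {V : Type*} [Fintype V] [DecidableEq V] {E : V → V → Prop} [DecidableRel E]
    (hT : IsTournament E) (S : Finset V) :
    2 * ∑ v ∈ S, outDegIn E S v = S.card * (S.card - 1) := by
  have hd : ∀ v ∈ S, outDegIn E S v + (S.filter (fun w => E w v)).card = S.card - 1 := by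
    intro v hv
    have hdisj : Disjoint (S.filter (fun w => E v w)) (S.filter (fun w => E w v)) := by
      rw [Finset.disjoint_left]
      intro w h1 h2
      have hvw : v ≠ w := by rintro rfl; exact hT.1 v (Finset.mem_filter.mp h1).2
      exact ((hT.2 v w hvw).mp (Finset.mem_filter.mp h1).2) (Finset.mem_filter.mp h2).2
    have hunion : S.filter (fun w => E v w) ∪ S.filter (fun w => E w v) = S.erase v := by
      ext w
      simp only [Finset.mem_union, Finset.mem_filter, Finset.mem_erase]
      constructor
      · rintro (⟨hw, h⟩ | ⟨hw, h⟩)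
        · exact ⟨fun hh => hT.1 v (hh ▸ h), hw⟩
        · exact ⟨fun hh => hT.1 v (hh ▸ h), hw⟩
      · rintro ⟨hwv, hw⟩
        by_cases h : E v w
        · exact Or.inl ⟨hw, h⟩
        · exact Or.inr ⟨hw, (hT.2 w v hwv).mpr h⟩
    have := Finset.card_union_of_disjoint hdisj
    rw [hunion, Finset.card_erase_of_mem hv] at this
    exact this.symm ▸ rfl
  have hswap : ∑ v ∈ S, outDegIn E S v = ∑ v ∈ S, (S.filter (fun w => E w v)).card := by
    simp only [outDegIn, Finset.card_filter]
    rw [Finset.sum_comm]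
  calc 2 * ∑ v ∈ S, outDegIn E S v
      = ∑ v ∈ S, outDegIn E S v + ∑ v ∈ S, (S.filter (fun w => E w v)).card := by
        rw [two_mul, hswap]
    _ = ∑ v ∈ S, (outDegIn E S v + (S.filter (fun w => E w v)).card) := by
        rw [Finset.sum_add_distrib]
    _ = ∑ _v ∈ S, (S.card - 1) := Finset.sum_congr rfl hd
    _ = S.card * (S.card - 1) := by rw [Finset.sum_const, smul_eq_mul]

theorem quarter_of_Wu_shrinks {V : Type*} [Fintype V] [DecidableEq V]
    (E : V → V → Prop) [DecidableRel E] (hT : IsTournament E)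
    (u : V) (s : ℕ) (hs : (W E u).card = s) (hne : (W E u).Nonempty) :
    -- headline: at least 1/4 of the vertices v in W_u satisfy |W_v| ≤ 2(s-1)/3
    ((s : ℝ) / 4 ≤
      ((W E u).filter (fun v => ((W E v).card : ℝ) ≤ 2 * ((s : ℝ) - 1) / 3)).card) ∧
    -- at least ⌈s/4⌉ vertices of W_u have induced out-degree at least (s-1)/3
    (⌈(s : ℝ) / 4⌉₊ ≤
      ((W E u).filter (fun v => ((s : ℝ) - 1) / 3 ≤ (outDegIn E (W E u) v : ℝ))).card) ∧
    -- and any such vertex v has |W_v| ≤ (s-1) - (s-1)/3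
    (∀ v ∈ W E u, ((s : ℝ) - 1) / 3 ≤ (outDegIn E (W E u) v : ℝ) →
      ((W E v).card : ℝ) ≤ ((s : ℝ) - 1) - ((s : ℝ) - 1) / 3) := by
  set S := W E u with hS
  have hs1 : 1 ≤ s := hs ▸ Finset.card_pos.mpr hne
  -- part 3
  have part3 : ∀ v ∈ S, ((s : ℝ) - 1) / 3 ≤ (outDegIn E S v : ℝ) →
      ((W E v).card : ℝ) ≤ ((s : ℝ) - 1) - ((s : ℝ) - 1) / 3 := by
    intro v hv hdeg
    have hnat : (W E v).card + outDegIn E S v ≤ s - 1 := by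
      have hdisj : Disjoint (W E v) (S.filter (fun w => E v w)) := by
        rw [Finset.disjoint_left]
        intro w h1 h2
        exact ((mem_W_iff E v w).mp h1).2.1 (Finset.mem_filter.mp h2).2
      have hsub : W E v ∪ S.filter (fun w => E v w) ⊆ S.erase v := by
        intro w hw
        rcases Finset.mem_union.mp hw with h | h
        · exact Finset.mem_erase.mpr ⟨((mem_W_iff E v w).mp h).1, W_subset hT hv h⟩
        · exact Finset.mem_erase.mpr
            ⟨fun hh => hT.1 v (hh ▸ (Finset.mem_filter.mp h).2), (Finset.mem_filter.mp h).1⟩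
      calc (W E v).card + outDegIn E S v
          = (W E v ∪ S.filter (fun w => E v w)).card :=
            (Finset.card_union_of_disjoint hdisj).symm
        _ ≤ (S.erase v).card := Finset.card_le_card hsub
        _ = s - 1 := by rw [Finset.card_erase_of_mem hv, hs]
    have hcast : ((W E v).card : ℝ) + (outDegIn E S v : ℝ) ≤ (s : ℝ) - 1 := by
      have := (Nat.cast_le (α := ℝ)).mpr hnat
      push_cast [Nat.cast_sub hs1] at this
      linarith
    linarith
  -- counting
  have hsum : 2 * ∑ v ∈ S, outDegIn E S v = s * (s - 1) := by
    rw [sum_outDeg hT S, hs]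
  have hsumR : 2 * ∑ v ∈ S, (outDegIn E S v : ℝ) = (s : ℝ) * ((s : ℝ) - 1) := by
    have := congrArg (Nat.cast : ℕ → ℝ) hsum
    push_cast [Nat.cast_sub hs1] at this
    linarith [this]
  set A := S.filter (fun v => ((s : ℝ) - 1) / 3 ≤ (outDegIn E S v : ℝ)) with hA
  have hdle : ∀ v ∈ S, (outDegIn E S v : ℝ) ≤ (s : ℝ) - 1 := by
    intro v hv
    have : outDegIn E S v ≤ s - 1 := by
      have : S.filter (fun w => E v w) ⊆ S.erase v := by
        intro w hw
        exact Finset.mem_erase.mpr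
          ⟨fun hh => hT.1 v (hh ▸ (Finset.mem_filter.mp hw).2), (Finset.mem_filter.mp hw).1⟩
      calc outDegIn E S v ≤ (S.erase v).card := Finset.card_le_card this
        _ = s - 1 := by rw [Finset.card_erase_of_mem hv, hs]
    have := (Nat.cast_le (α := ℝ)).mpr this
    push_cast [Nat.cast_sub hs1] at this
    linarith
  have hsplit : (s : ℝ) * ((s : ℝ) - 1) / 2 ≤
      (A.card : ℝ) * ((s : ℝ) - 1) + ((s : ℝ) - (A.card : ℝ)) * (((s : ℝ) - 1) / 3) := by
    have h1 : ∑ v ∈ A, (outDegIn E S v : ℝ) ≤ (A.card : ℝ) * ((s : ℝ) - 1) := by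
      calc ∑ v ∈ A, (outDegIn E S v : ℝ) ≤ ∑ _v ∈ A, ((s : ℝ) - 1) :=
            Finset.sum_le_sum (fun v hv => hdle v (Finset.mem_filter.mp hv).1)
        _ = (A.card : ℝ) * ((s : ℝ) - 1) := by rw [Finset.sum_const, nsmul_eq_mul]
    have h2 : ∑ v ∈ S.filter (fun v => ¬ (((s : ℝ) - 1) / 3 ≤ (outDegIn E S v : ℝ))),
        (outDegIn E S v : ℝ) ≤ ((s : ℝ) - (A.card : ℝ)) * (((s : ℝ) - 1) / 3) := by
      have hcard : (S.filter (fun v => ¬ (((s : ℝ) - 1) / 3 ≤ (outDegIn E S v : ℝ)))).card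
          = s - A.card := by
        have := Finset.card_filter_add_card_filter_not (s := S)
          (p := fun v => ((s : ℝ) - 1) / 3 ≤ (outDegIn E S v : ℝ))
        rw [← hA, hs] at this
        omega
      calc ∑ v ∈ S.filter (fun v => ¬ (((s : ℝ) - 1) / 3 ≤ (outDegIn E S v : ℝ))),
            (outDegIn E S v : ℝ)
          ≤ ∑ _v ∈ S.filter (fun v => ¬ (((s : ℝ) - 1) / 3 ≤ (outDegIn E S v : ℝ))),
            (((s : ℝ) - 1) / 3) := by
            refine Finset.sum_le_sum (fun v hv => ?_)
            have := (Finset.mem_filter.mp hv).2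
            linarith [not_le.mp this]
        _ = ((s : ℝ) - (A.card : ℝ)) * (((s : ℝ) - 1) / 3) := by
            rw [Finset.sum_const, nsmul_eq_mul, hcard]
            have hAle : A.card ≤ s := by
              rw [← hs]; exact Finset.card_le_card (Finset.filter_subset _ _)
            rw [Nat.cast_sub hAle]
    have hsplit0 : ∑ v ∈ S, (outDegIn E S v : ℝ) =
        ∑ v ∈ A, (outDegIn E S v : ℝ) +
        ∑ v ∈ S.filter (fun v => ¬ (((s : ℝ) - 1) / 3 ≤ (outDegIn E S v : ℝ))),
          (outDegIn E S v : ℝ) := by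
      rw [hA]
      exact (Finset.sum_filter_add_sum_filter_not S _ _).symm
    have : ∑ v ∈ S, (outDegIn E S v : ℝ) = (s : ℝ) * ((s : ℝ) - 1) / 2 := by
      push_cast at hsumR ⊢
      linarith
    linarith
  have key : (s : ℝ) / 4 ≤ (A.card : ℝ) := by
    by_cases h1 : s = 1
    · subst h1
      have : A = S := by
        apply Finset.filter_true_of_mem
        intro v hv
        simp only [Nat.cast_one]
        norm_num
      rw [this, hs]
      norm_num
    · have h2 : (2 : ℝ) ≤ (s : ℝ) := by
        have : 2 ≤ s := by omega
        exact_mod_cast this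
      nlinarith [hsplit]
  refine ⟨?_, ?_, part3⟩
  · have hsub : A ⊆ S.filter (fun v => ((W E v).card : ℝ) ≤ 2 * ((s : ℝ) - 1) / 3) := by
      intro v hv
      obtain ⟨hvS, hvd⟩ := Finset.mem_filter.mp hv
      refine Finset.mem_filter.mpr ⟨hvS, ?_⟩
      have := part3 v hvS hvd
      linarith
    calc (s : ℝ) / 4 ≤ (A.card : ℝ) := key
      _ ≤ _ := by exact_mod_cast Finset.card_le_card hsub
  · exact Nat.ceil_le.mpr key
end

section
/- In any tournament on a finite vertex set, if v ∈ W_u then v ∉ W_v and W_v ⊆ W_u \ {v}, where W_x denotes the set of vertices distinct from x that are not reachable from x by a directed path of length at most 2. -/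
theorem W_subset_erase {V : Type*} [Fintype V] [DecidableEq V]
    (E : V → V → Prop) [DecidableRel E] (hT : IsTournament E)
    (u v : V) (hv : v ∈ W E u) : v ∉ W E v ∧ W E v ⊆ W E u \ {v} := by
  obtain ⟨hirr, hasym⟩ := hT
  simp only [W, Finset.mem_filter, Finset.mem_univ, true_and] at hv
  obtain ⟨hvu, huv, h2⟩ := hv
  constructor
  · simp [W]
  · intro x hx
    simp only [W, Finset.mem_filter, Finset.mem_univ, true_and] at hx
    obtain ⟨hxv, hvx, hx2⟩ := hx
    have hEvu : E v u := by
      have := (hasym u v (Ne.symm hvu)).mp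
      by_contra h
      exact huv ((hasym u v (Ne.symm hvu)).mpr h)
    have hxu : x ≠ u := by
      rintro rfl
      exact hvx hEvu
    have hux : ¬ E u x := by
      intro hEux
      have hExv : E x v := (hasym x v hxv).mpr (fun h => hvx h)
      exact h2 x hxu hxv ⟨hEux, hExv⟩
    simp only [Finset.mem_sdiff, Finset.mem_singleton, W, Finset.mem_filter,
      Finset.mem_univ, true_and]
    refine ⟨⟨hxu, hux, ?_⟩, hxv⟩
    intro w hwu hwx ⟨hEuw, hEwx⟩
    have hwv : w ≠ v := by rintro rfl; exact huv hEuw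
    have hnEwv : ¬ E w v := fun h => h2 w hwu hwv ⟨hEuw, h⟩
    have hEvw : E v w := (hasym v w (Ne.symm hwv)).mpr hnEwv
    exact hx2 w (hwv) hwx ⟨hEvw, hEwx⟩
end

section
/- Let G be a tournament on V, U ⊆ V, u a weak king of U, and v ∈ V \ U. If there is no directed path of length at most 2 from u to v in G, then v is a weak king of U ∪ {v}. Moreover in that case the edge (v,u) is present in G. -/
theorem no_path_makes_new_vertex_weak_king {V : Type*} (E : V → V → Prop)
    (hT : IsTournament E) (U : Set V) (u v : V)
    (hu : IsWeakKing E U u) (hv : v ∉ U)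
    (hnp : ¬ (E u v ∨ ∃ j : V, E u j ∧ E j v)) :
    IsWeakKing E (U ∪ {v}) v ∧ E v u := by
  obtain ⟨huU, hk⟩ := hu
  push_neg at hnp
  obtain ⟨huv, hj⟩ := hnp
  have hne : u ≠ v := fun h => hv (h ▸ huU)
  have hvu : E v u := ((hT.2 v u hne.symm).mpr (fun h => huv ((hT.2 u v hne).mpr (by
    intro h'; exact (hT.2 v u hne.symm).mp h' h))))
  refine ⟨⟨Or.inr rfl, ?_⟩, hvu⟩
  rintro x (hx | rfl)
  · rcases hk x hx with rfl | hux | ⟨j, huj, hjx⟩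
    · exact Or.inr (Or.inl hvu)
    · exact Or.inr (Or.inr ⟨u, hvu, hux⟩)
    · have hjv : j ≠ v := fun h => huv (h ▸ huj)
      have hvj : E v j := (hT.2 v j hjv.symm).mpr (hj j huj)
      exact Or.inr (Or.inr ⟨j, hvj, hjx⟩)
  · exact Or.inl rfl
end

section
/- Let W_u be defined for each vertex u of a finite tournament as the set of vertices not reachable from u by a path of length at most 2. Consider the random process: start at any vertex u_0; while W_{u_t} ≠ ∅, pick u_{t+1} uniformly at random from W_{u_t}. Then the process terminates with probability 1, and E[|W_{u_{t+4}}|] ≤ (11/12)·|W_{u_t}| + 1 whenever considering the bound that with probability at least 1/4 a single step reduces |W| to at most 2|W|/3 and |W| always strictly decreases. -/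
/-- One step of the random process: if `W u` is nonempty, move to a uniformly random
element of `W u`; otherwise stay put. -/
noncomputable def step {V : Type*} [Fintype V] [DecidableEq V]
    (E : V → V → Prop) [DecidableRel E] (u : V) : PMF V :=
  if h : (W E u).Nonempty then PMF.uniformOfFinset (W E u) h else PMF.pure u

/-- Four steps of the random process started at `u`. -/
noncomputable def fourStep {V : Type*} [Fintype V] [DecidableEq V]
    (E : V → V → Prop) [DecidableRel E] (u : V) : PMF V :=
  (step E u).bind fun a => (step E a).bind fun b => (step E b).bind (step E)


/-!
A vertex `v ∈ W u` beats `u`, and everything `v` fails to reach in two steps is then also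
unreachable from `u`; so `W v ⊊ W u`, which gives termination and makes `|W|` a
supermartingale along the process. For the expectation bound only the first step matters:
`v ↦ W v` restricted to `W u` is an asymmetric relation on `W u`, so the average of `|W v|`
over `v ∈ W u` is at most `(|W u| - 1) / 2`.
-/

open scoped Finset

namespace PMF

variable {α β : Type*} [Fintype α] [Fintype β]

noncomputable def expect (p : PMF α) (f : α → ℝ) : ℝ :=
  ∑ a, (p a).toReal * f a

theorem expect_pure (a : α) (f : α → ℝ) : (PMF.pure a).expect f = f a := by
  classical
  simp [expect, pure_apply, apply_ite ENNReal.toReal]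

theorem expect_bind (p : PMF α) (k : α → PMF β) (f : β → ℝ) :
    (p.bind k).expect f = p.expect fun a => (k a).expect f := by
  simp only [expect, bind_apply, tsum_fintype]
  simp_rw [ENNReal.toReal_sum fun a _ =>
      ENNReal.mul_ne_top (p.apply_ne_top a) ((k a).apply_ne_top _), ENNReal.toReal_mul,
    Finset.sum_mul, Finset.mul_sum]
  rw [Finset.sum_comm]
  exact Finset.sum_congr rfl fun a _ => Finset.sum_congr rfl fun b _ => by ring

theorem expect_mono (p : PMF α) {f g : α → ℝ} (h : ∀ a, f a ≤ g a) :
    p.expect f ≤ p.expect g :=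
  Finset.sum_le_sum fun a _ => mul_le_mul_of_nonneg_left (h a) ENNReal.toReal_nonneg

theorem expect_bind_le (p : PMF α) {k : α → PMF α} {f : α → ℝ}
    (hk : ∀ a, (k a).expect f ≤ f a) : (p.bind k).expect f ≤ p.expect f := by
  rw [expect_bind]
  exact p.expect_mono hk

theorem expect_uniformOfFinset [DecidableEq α] {s : Finset α} (hs : s.Nonempty) (f : α → ℝ) :
    (uniformOfFinset s hs).expect f = (#s : ℝ)⁻¹ * ∑ a ∈ s, f a := by
  simp only [expect, uniformOfFinset_apply, apply_ite ENNReal.toReal, ENNReal.toReal_inv,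
    ENNReal.toReal_natCast, ENNReal.toReal_zero, ite_mul, zero_mul]
  rw [Finset.sum_ite_mem, Finset.univ_inter, Finset.mul_sum]

end PMF

theorem two_mul_card_filter_le_of_asymm {α : Type*} [DecidableEq α] (s : Finset α)
    (r : α → α → Prop) [DecidableRel r] (hr : ∀ a b, r a b → ¬ r b a) :
    2 * #((s ×ˢ s).filter fun p => r p.1 p.2) ≤ #s * (#s - 1) := by
  set P := (s ×ˢ s).filter fun p => r p.1 p.2
  have hdisj : Disjoint P (P.map (Equiv.prodComm α α).toEmbedding) := by
    rw [Finset.disjoint_left]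
    intro p hp hp'
    simp only [P, Finset.mem_map_equiv, Finset.mem_filter] at hp hp'
    exact hr _ _ hp.2 hp'.2
  have hsub : P ∪ P.map (Equiv.prodComm α α).toEmbedding ⊆ s.offDiag := by
    intro p hp
    simp only [P, Finset.mem_union, Finset.mem_map_equiv, Finset.mem_filter,
      Finset.mem_product, Finset.mem_offDiag, Equiv.prodComm_symm, Equiv.prodComm_apply,
      Prod.fst_swap, Prod.snd_swap] at hp ⊢
    rcases hp with ⟨⟨h1, h2⟩, hr'⟩ | ⟨⟨h2, h1⟩, hr'⟩
    · exact ⟨h1, h2, fun h => hr _ _ hr' (h ▸ hr')⟩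
    · exact ⟨h1, h2, fun h => hr _ _ hr' (h ▸ hr')⟩
  calc 2 * #P = #(P ∪ P.map (Equiv.prodComm α α).toEmbedding) := by
        rw [Finset.card_union_of_disjoint hdisj, Finset.card_map]; ring
    _ ≤ #s.offDiag := Finset.card_le_card hsub
    _ = #s * (#s - 1) := by rw [Finset.offDiag_card, Nat.mul_sub_one]

section Tournament

variable {V : Type*} [Fintype V] [DecidableEq V] {E : V → V → Prop} [DecidableRel E]

theorem mem_W {u v : V} :
    v ∈ W E u ↔ v ≠ u ∧ ¬ E u v ∧ ∀ w : V, w ≠ u → w ≠ v → ¬ (E u w ∧ E w v) := by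
  simp [W]

theorem self_notMem_W (u : V) : u ∉ W E u := by
  simp [mem_W]

theorem IsTournament.adj_of_mem_W (hT : IsTournament E) {u v : V} (hv : v ∈ W E u) :
    E v u :=
  (hT.2 v u (mem_W.1 hv).1).2 (mem_W.1 hv).2.1

theorem IsTournament.notMem_W_of_mem_W (hT : IsTournament E) {u v : V} (hv : v ∈ W E u) :
    u ∉ W E v :=
  fun hu => (mem_W.1 hu).2.1 (hT.adj_of_mem_W hv)

theorem IsTournament.W_subset_of_mem_W (hT : IsTournament E) {u v : V} (hv : v ∈ W E u) :
    W E v ⊆ W E u := by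
  obtain ⟨hvu, hEuv, hpath⟩ := mem_W.1 hv
  have hEvu : E v u := hT.adj_of_mem_W hv
  intro x hx
  obtain ⟨hxv, hEvx, hpath'⟩ := mem_W.1 hx
  have hxu : x ≠ u := by rintro rfl; exact hEvx hEvu
  refine mem_W.2 ⟨hxu, fun hEux => hpath' u (Ne.symm hvu) (Ne.symm hxu) ⟨hEvu, hEux⟩, ?_⟩
  rintro w hwu hwx ⟨hEuw, hEwx⟩
  have hwv : w ≠ v := by rintro rfl; exact hEuv hEuw
  -- `w` is an out-neighbour of `u`; whichever way the edge `vw` points, a short path appears.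
  by_cases hvw : E v w
  · exact hpath' w hwv hwx ⟨hvw, hEwx⟩
  · exact hpath w hwu hwv ⟨hEuw, (hT.2 w v hwv).2 hvw⟩

theorem IsTournament.W_ssubset_of_mem_W (hT : IsTournament E) {u v : V} (hv : v ∈ W E u) :
    W E v ⊂ W E u :=
  (Finset.ssubset_iff_of_subset (hT.W_subset_of_mem_W hv)).2 ⟨v, hv, self_notMem_W v⟩

theorem IsTournament.two_mul_sum_card_W_le (hT : IsTournament E) (u : V) :
    2 * ∑ v ∈ W E u, #(W E v) ≤ #(W E u) * (#(W E u) - 1) := by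
  have hsum : ∑ v ∈ W E u, #(W E v) = #((W E u ×ˢ W E u).filter fun p => p.2 ∈ W E p.1) := by
    rw [Finset.card_filter, Finset.sum_product]
    refine Finset.sum_congr rfl fun v hv => ?_
    rw [← Finset.card_filter]
    dsimp only
    rw [Finset.filter_mem_eq_inter, Finset.inter_eq_right.2 (hT.W_subset_of_mem_W hv)]
  rw [hsum]
  exact two_mul_card_filter_le_of_asymm _ (fun v w => w ∈ W E v)
    fun _ _ h => hT.notMem_W_of_mem_W h

theorem step_of_nonempty {u : V} (h : (W E u).Nonempty) :
    step E u = PMF.uniformOfFinset (W E u) h :=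
  dif_pos h

theorem step_of_eq_empty {u : V} (h : W E u = ∅) : step E u = PMF.pure u :=
  dif_neg (Finset.not_nonempty_iff_eq_empty.2 h)

theorem IsTournament.expect_step_card_W_le (hT : IsTournament E) (u : V) :
    (step E u).expect (fun v => (#(W E v) : ℝ)) ≤ #(W E u) := by
  rcases (W E u).eq_empty_or_nonempty with h | h
  · rw [step_of_eq_empty h, PMF.expect_pure]
  rw [step_of_nonempty h, PMF.expect_uniformOfFinset, inv_mul_le_iff₀ (by positivity)]
  calc ∑ v ∈ W E u, (#(W E v) : ℝ) ≤ ∑ _v ∈ W E u, (#(W E u) : ℝ) :=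
        Finset.sum_le_sum fun v hv => by
          exact_mod_cast Finset.card_le_card (hT.W_subset_of_mem_W hv)
    _ = #(W E u) * #(W E u) := by rw [Finset.sum_const, nsmul_eq_mul]

theorem IsTournament.expect_step_card_W_le_half (hT : IsTournament E) (u : V) :
    (step E u).expect (fun v => (#(W E v) : ℝ)) ≤ #(W E u) / 2 := by
  rcases (W E u).eq_empty_or_nonempty with h | h
  · rw [step_of_eq_empty h, PMF.expect_pure, h, Finset.card_empty, Nat.cast_zero, zero_div]
  have hpos : (0 : ℝ) < #(W E u) := by exact_mod_cast h.card_pos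
  have hsum : 2 * ∑ v ∈ W E u, (#(W E v) : ℝ) ≤ #(W E u) * (#(W E u) - 1) := by
    have := hT.two_mul_sum_card_W_le u
    rw [← Nat.cast_le (α := ℝ)] at this
    push_cast [Nat.cast_sub h.card_pos] at this
    exact this
  rw [step_of_nonempty h, PMF.expect_uniformOfFinset, inv_mul_le_iff₀ hpos]
  nlinarith

theorem IsTournament.expect_fourStep_card_W_le (hT : IsTournament E) (u : V) :
    (fourStep E u).expect (fun v => (#(W E v) : ℝ)) ≤
      (step E u).expect (fun v => (#(W E v) : ℝ)) := by
  have hstep := hT.expect_step_card_W_le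
  have htwo : ∀ b, ((step E b).bind (step E)).expect (fun v => (#(W E v) : ℝ)) ≤ #(W E b) :=
    fun b => (PMF.expect_bind_le _ hstep).trans (hstep b)
  have hthree : ∀ a, ((step E a).bind fun b => (step E b).bind (step E)).expect
      (fun v => (#(W E v) : ℝ)) ≤ #(W E a) :=
    fun a => (PMF.expect_bind_le _ htwo).trans (hstep a)
  exact PMF.expect_bind_le _ hthree

end Tournament

theorem random_king_process {V : Type*} [Fintype V] [DecidableEq V]
    (E : V → V → Prop) [DecidableRel E] (hT : IsTournament E) :
    -- the process terminates (with probability 1): every trajectory that moves into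
    -- W of the current vertex whenever it is nonempty reaches an empty W
    (∀ u : ℕ → V, (∀ t, (W E (u t)).Nonempty → u (t + 1) ∈ W E (u t)) →
      ∃ t, W E (u t) = ∅) ∧
    -- expected size of W after four steps: E[|W_{u_{t+4}}|] ≤ (11/12)·|W_{u_t}| + 1
    (∀ u : V,
      ∑ v : V, ((fourStep E u) v).toReal * ((W E v).card : ℝ) ≤
        11 / 12 * ((W E u).card : ℝ) + 1) := by
  refine ⟨fun u hu => ?_, fun u => ?_⟩
  · by_contra! hnonempty
    exact not_strictAnti_of_wellFoundedLT (fun t => W E (u t))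
      (strictAnti_nat_of_succ_lt fun t => hT.W_ssubset_of_mem_W (hu t (hnonempty t)))
  · have hhalf := (hT.expect_fourStep_card_W_le u).trans (hT.expect_step_card_W_le_half u)
    have hcard : (0 : ℝ) ≤ #(W E u) := Nat.cast_nonneg _
    calc _ = (fourStep E u).expect (fun v => (#(W E v) : ℝ)) := rfl
      _ ≤ 11 / 12 * (#(W E u) : ℝ) + 1 := by linarith
end
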